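/- Let E be an infinite-dimensional Banach space over ℝ, let Γ be an index set with card(Γ) > 𝔠 and dim E < card(Γ), and let H = ℓ_2(Γ). If the set 𝓛(E; H) \ Π_1(E; H) of continuous linear operators from E to H that are not absolutely summing is nonempty, then it is (α, card(Γ))-lineable in the space of continuous linear operators from E to H for every cardinal α < card(Γ). -/

import Mathlib

universe v u w

/-- A subset `A` of a real vector space `V` is `β`-lineable if `A ∪ {0}` contains a linear
subspace of `V` of Hamel dimension `β`. -/
def Lineable {V : Type v} [AddCommGroup V] [Module ℝ V] (A : Set V) (β : Cardinal.{v}) : Prop :=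
  ∃ S : Submodule ℝ V, Module.rank ℝ ↥S = β ∧ (S : Set V) ⊆ A ∪ {0}

/-- A subset `A` of a real vector space `V` is `(α, β)`-lineable if `A` is `α`-lineable and
every subspace `W ⊆ A ∪ {0}` with `dim W = α` is contained in a subspace `S` with `dim S = β`
and `W ⊆ S ⊆ A ∪ {0}`. -/
def ABLineable {V : Type v} [AddCommGroup V] [Module ℝ V] (A : Set V)
    (α β : Cardinal.{v}) : Prop :=
  Lineable A α ∧
  ∀ W : Submodule ℝ V, Module.rank ℝ ↥W = α → (W : Set V) ⊆ A ∪ {0} →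
    ∃ S : Submodule ℝ V, W ≤ S ∧ Module.rank ℝ ↥S = β ∧ (S : Set V) ⊆ A ∪ {0}

/-- A continuous linear operator `T : E → F` between real normed spaces is absolutely summing
if for every sequence `(x j)` in `E` such that `∑ j, |φ (x j)| < ∞` for every continuous linear
functional `φ` on `E`, one has `∑ j, ‖T (x j)‖ < ∞`. -/
def AbsolutelySumming {E : Type u} {F : Type w} [NormedAddCommGroup E] [NormedSpace ℝ E]
    [NormedAddCommGroup F] [NormedSpace ℝ F] (T : E →L[ℝ] F) : Prop :=
  ∀ x : ℕ → E, (∀ φ : E →L[ℝ] ℝ, Summable fun j => |φ (x j)|) →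
    Summable fun j => ‖T (x j)‖

/-!
Fix an operator `T₀` that is not absolutely summing. All operators of a subspace `W` with
`dim W < card Γ` take values supported in one set `J ⊆ Γ` with
`card J ≤ dim W · dim E · ℵ₀ < card Γ`, so `Γ × Γ` embeds into `Γ \ J` by some `e`. Copying `T₀`
onto each block `e(·, γ)` gives operators `U γ`, and restriction to the block `e(·, γ)` maps
`w + ∑ c γ' • U γ'` (with `w ∈ W`) to `c γ • T₀`. Absolutely summing operators are stable under
composition on the left, so such a sum is absolutely summing only if every `c γ` vanishes, i.e.
only if it lies in `W`. Hence `W ⊔ span (range U)` has dimension `card Γ` and its nonzero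
elements are not absolutely summing.
-/

open Function Set Cardinal
open scoped ENNReal lp

namespace lp

variable {ι κ : Type*} {p : ℝ≥0∞} [Fact (1 ≤ p)]

private lemma toReal_pos_of_ne_top (hp : p ≠ ∞) : 0 < p.toReal :=
  ENNReal.toReal_pos (zero_lt_one.trans_le Fact.out).ne' hp

lemma sum_rpow_comp_le_norm_rpow (hp : p ≠ ∞) (f : ℓ^p(κ, ℝ)) {m : ι → κ}
    (hm : Injective m) (s : Finset ι) :
    ∑ i ∈ s, ‖f (m i)‖ ^ p.toReal ≤ ‖f‖ ^ p.toReal := by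
  have := sum_rpow_le_norm_rpow (toReal_pos_of_ne_top hp) f (s.map ⟨m, hm⟩)
  rwa [Finset.sum_map] at this

variable (p) in
noncomputable def comapCLM (hp : p ≠ ∞) {m : ι → κ} (hm : Injective m) :
    ℓ^p(κ, ℝ) →L[ℝ] ℓ^p(ι, ℝ) :=
  LinearMap.mkContinuous
    { toFun := fun f => ⟨fun i => f (m i), memℓp_gen' (sum_rpow_comp_le_norm_rpow hp f hm)⟩
      map_add' := fun _ _ => rfl
      map_smul' := fun _ _ => rfl }
    1 fun f => by
      rw [one_mul]
      exact norm_le_of_forall_sum_le (toReal_pos_of_ne_top hp) (norm_nonneg' f)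
        (sum_rpow_comp_le_norm_rpow hp f hm)

@[simp] lemma comapCLM_apply (hp : p ≠ ∞) {m : ι → κ} (hm : Injective m)
    (f : ℓ^p(κ, ℝ)) (i : ι) : comapCLM p hp hm f i = f (m i) := rfl

lemma norm_rpow_extend_zero (hp : p ≠ ∞) (m : ι → κ) (f : ι → ℝ) :
    (fun k => ‖extend m f 0 k‖ ^ p.toReal) = extend m (fun i => ‖f i‖ ^ p.toReal) 0 := by
  funext k
  rw [apply_extend (fun x : ℝ => ‖x‖ ^ p.toReal)]
  congr 1
  funext
  simp [Real.zero_rpow (toReal_pos_of_ne_top hp).ne']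

lemma memℓp_extend_zero (hp : p ≠ ∞) {m : ι → κ} (hm : Injective m) (f : ℓ^p(ι, ℝ)) :
    Memℓp (extend m f 0) p := by
  refine memℓp_gen ?_
  rw [norm_rpow_extend_zero hp, summable_extend_zero hm]
  exact (lp.memℓp f).summable (toReal_pos_of_ne_top hp)

lemma norm_extend_zero (hp : p ≠ ∞) {m : ι → κ} (hm : Injective m) (f : ℓ^p(ι, ℝ)) :
    ‖(⟨extend m f 0, memℓp_extend_zero hp hm f⟩ : ℓ^p(κ, ℝ))‖ = ‖f‖ := by
  rw [norm_eq_tsum_rpow (toReal_pos_of_ne_top hp), norm_eq_tsum_rpow (toReal_pos_of_ne_top hp)]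
  dsimp only
  rw [norm_rpow_extend_zero hp, tsum_extend_zero hm]

variable (p) in
noncomputable def extendZeroCLM (hp : p ≠ ∞) {m : ι → κ} (hm : Injective m) :
    ℓ^p(ι, ℝ) →L[ℝ] ℓ^p(κ, ℝ) :=
  LinearMap.mkContinuous
    { toFun := fun f => ⟨extend m f 0, memℓp_extend_zero hp hm f⟩
      map_add' := fun f g => lp.ext <| by
        ext k
        show extend m ⇑(f + g) 0 k = extend m f 0 k + extend m g 0 k
        rw [lp.coeFn_add, ← Pi.add_apply, ← extend_add, add_zero]
      map_smul' := fun c f => lp.ext <| by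
        ext k
        show extend m ⇑(c • f) 0 k = c • extend m f 0 k
        rw [lp.coeFn_smul, ← Pi.smul_apply, ← extend_smul, smul_zero] }
    1 fun f => (norm_extend_zero hp hm f).trans_le (one_mul _).ge

lemma coe_extendZeroCLM (hp : p ≠ ∞) {m : ι → κ} (hm : Injective m)
    (f : ℓ^p(ι, ℝ)) : ⇑(extendZeroCLM p hp hm f) = extend m f 0 := rfl

lemma comapCLM_comp_extendZeroCLM (hp : p ≠ ∞) {m : ι → κ} (hm : Injective m) :
    comapCLM p hp hm ∘L extendZeroCLM p hp hm = ContinuousLinearMap.id ℝ _ := by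
  ext f i
  simp [coe_extendZeroCLM, hm.extend_apply]

lemma comapCLM_comp_extendZeroCLM_of_disjoint (hp : p ≠ ∞) {ι' : Type*} {m : ι → κ}
    (hm : Injective m) {m' : ι' → κ} (hm' : Injective m') (h : Disjoint (range m) (range m')) :
    comapCLM p hp hm ∘L extendZeroCLM p hp hm' = 0 := by
  ext f i
  simp only [ContinuousLinearMap.comp_apply, comapCLM_apply, coe_extendZeroCLM]
  rw [extend_apply' _ _ _ fun ⟨j, hj⟩ => h.ne_of_mem (mem_range_self i) (mem_range_self j) hj.symm]
  rfl

lemma countable_support (hp : p ≠ ∞) (f : ℓ^p(ι, ℝ)) : (support ⇑f).Countable :=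
  ((lp.memℓp f).summable (toReal_pos_of_ne_top hp)).countable_support.mono fun _ hi =>
    (Real.rpow_pos_of_pos (norm_pos_iff.2 hi) _).ne'

end lp

namespace AbsolutelySumming

variable {E F G : Type*} [NormedAddCommGroup E] [NormedSpace ℝ E] [NormedAddCommGroup F]
  [NormedSpace ℝ F] [NormedAddCommGroup G] [NormedSpace ℝ G]

theorem zero : AbsolutelySumming (0 : E →L[ℝ] F) := fun _ _ => by
  simp [summable_zero]

theorem of_norm_le {T : E →L[ℝ] F} {S : E →L[ℝ] G} (C : ℝ) (h : ∀ x, ‖T x‖ ≤ C * ‖S x‖)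
    (hS : AbsolutelySumming S) : AbsolutelySumming T := fun x hx =>
  .of_nonneg_of_le (fun _ => norm_nonneg _) (fun j => h (x j)) ((hS x hx).mul_left C)

theorem clm_comp (L : F →L[ℝ] G) {T : E →L[ℝ] F} (hT : AbsolutelySumming T) :
    AbsolutelySumming (L ∘L T) :=
  of_norm_le ‖L‖ (fun x => L.le_opNorm (T x)) hT

theorem of_smul {T : E →L[ℝ] F} {c : ℝ} (hc : c ≠ 0) (h : AbsolutelySumming (c • T)) :
    AbsolutelySumming T :=
  of_norm_le |c|⁻¹ (fun x => by
    rw [smul_apply, norm_smul, Real.norm_eq_abs,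
      inv_mul_cancel_left₀ (abs_ne_zero.2 hc)]) h

end AbsolutelySumming

theorem Submodule.exists_le_rank_eq {K V : Type*} [DivisionRing K] [AddCommGroup V] [Module K V]
    {S : Submodule K V} {α : Cardinal} (h : α ≤ Module.rank K S) :
    ∃ S' ≤ S, Module.rank K S' = α := by
  obtain ⟨s, hs, hli⟩ := exists_set_linearIndependent K S
  obtain ⟨t, hts, ht⟩ := le_mk_iff_exists_subset.1 (hs ▸ h)
  refine ⟨(Submodule.span K t).map S.subtype, Submodule.map_subtype_le _ _, ?_⟩
  rw [← (Submodule.equivMapOfInjective _ S.injective_subtype _).rank_eq,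
    rank_span_set (LinearIndepOn.mono hli hts), ht]

theorem ABLineable.of_forall_rank_lt {V : Type*} [AddCommGroup V] [Module ℝ V] {A : Set V}
    {α β : Cardinal} (hαβ : α < β)
    (h : ∀ W : Submodule ℝ V, Module.rank ℝ W < β → (W : Set V) ⊆ A ∪ {0} →
      ∃ S : Submodule ℝ V, W ≤ S ∧ Module.rank ℝ S = β ∧ (S : Set V) ⊆ A ∪ {0}) :
    ABLineable A α β := by
  refine ⟨?_, fun W hW hWA => h W (hW ▸ hαβ) hWA⟩
  obtain ⟨S, -, hS, hSA⟩ := h ⊥ (rank_bot ℝ V ▸ zero_le.trans_lt hαβ)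
    (Submodule.bot_coe (R := ℝ) (M := V) ▸ subset_union_right)
  obtain ⟨S', hS'S, hS'⟩ := S.exists_le_rank_eq (hS ▸ hαβ.le)
  exact ⟨S', hS', (SetLike.coe_subset_coe.2 hS'S).trans hSA⟩

theorem rank_sup_span_range_eq {K V ι : Type*} [DivisionRing K] [AddCommGroup V] [Module K V]
    {W : Submodule K V} {U : ι → V} (hU : LinearIndependent K U) (hU₀ : ℵ₀ ≤ #(range U))
    (hW : Module.rank K W ≤ #(range U)) :
    Module.rank K ↥(W ⊔ Submodule.span K (range U)) = #(range U) := by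
  rw [← rank_span hU] at hU₀ hW ⊢
  exact le_antisymm ((Submodule.rank_add_le_rank_add_rank W _).trans (add_eq_right hU₀ hW).le)
    (Submodule.rank_mono le_sup_right)

section Operators

open Submodule

variable {E : Type u} [NormedAddCommGroup E] [NormedSpace ℝ E] {Γ : Type w} {p : ℝ≥0∞}
  [Fact (1 ≤ p)]

theorem exists_common_support_card_le (hp : p ≠ ∞)
    (W : Submodule ℝ (E →L[ℝ] ℓ^p(Γ, ℝ))) :
    ∃ J : Set Γ, (∀ w ∈ W, ∀ x : E, ∀ δ ∉ J, w x δ = 0) ∧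
      lift.{u} #J ≤ Module.rank ℝ W * lift.{w} (Module.rank ℝ E) * ℵ₀ := by
  let bW := Module.Basis.ofVectorSpace ℝ W
  let bE := Module.Basis.ofVectorSpace ℝ E
  let A (q : Module.Basis.ofVectorSpaceIndex ℝ W × Module.Basis.ofVectorSpaceIndex ℝ E) :
      Set Γ := support ⇑((bW q.1 : E →L[ℝ] ℓ^p(Γ, ℝ)) (bE q.2))
  refine ⟨⋃ q, A q, fun w hw x δ hδ => ?_, ?_⟩
  · let B : W →ₗ[ℝ] E →ₗ[ℝ] ℝ := (ContinuousLinearMap.coeLM ℝ).comp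
      ((ContinuousLinearMap.compL ℝ E _ ℝ (lp.evalCLM ℝ (fun _ : Γ => ℝ) p δ)).toLinearMap.comp
        W.subtype)
    have hB : B = 0 := LinearMap.ext_basis bW bE fun i k =>
      notMem_support.1 fun h => hδ (mem_iUnion.2 ⟨(i, k), h⟩)
    exact LinearMap.congr_fun₂ hB ⟨w, hw⟩ x
  · calc lift.{u} #(⋃ q, A q)
        ≤ lift.{w} #(Module.Basis.ofVectorSpaceIndex ℝ W × Module.Basis.ofVectorSpaceIndex ℝ E)
          * ⨆ q, lift.{max u w} #(A q) := by
          rw [← lift_umax.{w, u}]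
          exact mk_iUnion_le_lift A
      _ ≤ Module.rank ℝ W * lift.{w} (Module.rank ℝ E) * ℵ₀ := by
          have hidx : lift.{w} #(Module.Basis.ofVectorSpaceIndex ℝ W ×
              Module.Basis.ofVectorSpaceIndex ℝ E) =
                Module.rank ℝ W * lift.{w} (Module.rank ℝ E) := by
            rw [mk_prod, ← bW.mk_eq_rank'', ← bE.mk_eq_rank'', lift_mul, lift_id', lift_lift,
              lift_id', lift_umax.{u, w}]
          rw [hidx]
          gcongr
          exact ciSup_le' fun q => lift_le_aleph0.2 (lp.countable_support hp _).le_aleph0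

theorem exists_linearIndependent_sup_span_subset (hp : p ≠ ∞)
    (T₀ : E →L[ℝ] ℓ^p(Γ, ℝ)) (hT₀ : ¬AbsolutelySumming T₀)
    (W : Submodule ℝ (E →L[ℝ] ℓ^p(Γ, ℝ)))
    (hWA : (W : Set (E →L[ℝ] ℓ^p(Γ, ℝ))) ⊆ {T | ¬AbsolutelySumming T} ∪ {0})
    (J : Set Γ) (hWJ : ∀ w ∈ W, ∀ x : E, ∀ δ ∉ J, w x δ = 0)
    {e : Γ × Γ → Γ} (he : Injective e) (heJ : ∀ q, e q ∉ J) :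
    ∃ U : Γ → (E →L[ℝ] ℓ^p(Γ, ℝ)), LinearIndependent ℝ U ∧
      (↑(W ⊔ span ℝ (range U)) : Set (E →L[ℝ] ℓ^p(Γ, ℝ))) ⊆
        {T | ¬AbsolutelySumming T} ∪ {0} := by
  classical
  have hm (γ : Γ) : Injective fun σ => e (σ, γ) := fun _ _ h => congrArg Prod.fst (he h)
  -- `U γ` is a copy of `T₀` on the block `e(·, γ)`; `R γ` restricts to that block.
  let U (γ : Γ) := lp.extendZeroCLM p hp (hm γ) ∘L T₀
  let R (γ : Γ) := ContinuousLinearMap.compL ℝ E _ _ (lp.comapCLM p hp (hm γ))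
  have hRU (γ γ' : Γ) : R γ (U γ') = if γ' = γ then T₀ else 0 := by
    show lp.comapCLM p hp (hm γ) ∘L lp.extendZeroCLM p hp (hm γ') ∘L T₀ = _
    split_ifs with h
    · subst h
      rw [← ContinuousLinearMap.comp_assoc, lp.comapCLM_comp_extendZeroCLM,
        ContinuousLinearMap.id_comp]
    · rw [← ContinuousLinearMap.comp_assoc, lp.comapCLM_comp_extendZeroCLM_of_disjoint,
        ContinuousLinearMap.zero_comp]
      rw [Set.disjoint_iff]
      rintro _ ⟨⟨σ, rfl⟩, ⟨σ', hσ'⟩⟩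
      exact h (congrArg Prod.snd (he hσ'))
  have hRW (γ : Γ) {w} (hw : w ∈ W) : R γ w = 0 := by
    ext x σ
    exact hWJ w hw x _ (heJ _)
  have hR (γ : Γ) {w} (hw : w ∈ W) (c : Γ →₀ ℝ) :
      R γ (w + c.sum fun γ' a => a • U γ') = c γ • T₀ := by
    rw [map_add, hRW γ hw, zero_add, map_finsuppSum]
    simp +contextual [hRU, smul_ite]
  have hT₀ne : T₀ ≠ 0 := fun h => hT₀ (h ▸ AbsolutelySumming.zero)
  refine ⟨U, linearIndependent_iff.2 fun c hc => Finsupp.ext fun γ => ?_, ?_⟩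
  · have := hR γ W.zero_mem c
    rw [zero_add, ← Finsupp.linearCombination_apply, hc, map_zero] at this
    exact (smul_eq_zero.1 this.symm).resolve_right hT₀ne
  · intro T hT
    obtain ⟨w, hw, u, hu, rfl⟩ := mem_sup.1 hT
    obtain ⟨c, rfl⟩ := Finsupp.mem_span_range_iff_exists_finsupp.1 hu
    by_cases habs : AbsolutelySumming (w + c.sum fun γ a => a • U γ)
    · have hc : c = 0 := Finsupp.ext fun γ => by
        by_contra hcγ
        exact hT₀ (.of_smul hcγ (hR γ hw c ▸ habs.clm_comp _))
      subst hc
      rw [Finsupp.sum_zero_index, add_zero] at habs ⊢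
      exact hWA hw
    · exact Or.inl habs

theorem exists_le_rank_eq_subset_setOf_not_absolutelySumming (hp : p ≠ ∞) (hΓ : ℵ₀ < #Γ)
    (hEΓ : lift.{w} (Module.rank ℝ E) < lift.{u} #Γ)
    (T₀ : E →L[ℝ] ℓ^p(Γ, ℝ)) (hT₀ : ¬AbsolutelySumming T₀)
    (W : Submodule ℝ (E →L[ℝ] ℓ^p(Γ, ℝ))) (hW : Module.rank ℝ W < lift.{u} #Γ)
    (hWA : (W : Set (E →L[ℝ] ℓ^p(Γ, ℝ))) ⊆ {T | ¬AbsolutelySumming T} ∪ {0}) :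
    ∃ S : Submodule ℝ (E →L[ℝ] ℓ^p(Γ, ℝ)), W ≤ S ∧ Module.rank ℝ S = lift.{u} #Γ ∧
      (S : Set (E →L[ℝ] ℓ^p(Γ, ℝ))) ⊆ {T | ¬AbsolutelySumming T} ∪ {0} := by
  have hΓ₀ : ℵ₀ ≤ lift.{u} #Γ := aleph0_le_lift.2 hΓ.le
  have : Infinite Γ := infinite_iff.2 hΓ.le
  obtain ⟨J, hWJ, hJ⟩ := exists_common_support_card_le hp W
  have hJΓ : #J < #Γ := lift_lt.{w, u}.1 <| hJ.trans_lt <|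
    mul_lt_of_lt hΓ₀ (mul_lt_of_lt hΓ₀ hW hEΓ) (aleph0_lt_lift.2 hΓ)
  obtain ⟨e⟩ : Nonempty (Γ × Γ ≃ ↥Jᶜ) := Cardinal.eq.1 <| by
    rw [mk_compl_of_infinite J hJΓ, mk_prod, lift_id, mul_eq_self hΓ.le]
  obtain ⟨U, hU, hUA⟩ := exists_linearIndependent_sup_span_subset hp T₀ hT₀ W hWA J hWJ
    (Subtype.val_injective.comp e.injective) fun q => (e q).2
  have hrange : #(range U) = lift.{u} #Γ := by
    rw [← lift_id'.{w, u} #(range U), mk_range_eq_of_injective hU.injective, lift_umax.{w, u}]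
  refine ⟨W ⊔ Submodule.span ℝ (range U), le_sup_left, ?_, hUA⟩
  rw [← hrange] at hΓ₀ hW ⊢
  exact rank_sup_span_range_eq hU hΓ₀ hW.le

end Operators

theorem statement16_general (E : Type u) [NormedAddCommGroup E] [NormedSpace ℝ E]
    (Γ : Type w)
    (hΓ : Cardinal.continuum < Cardinal.mk Γ)
    (hEΓ : Cardinal.lift.{w} (Module.rank ℝ E) < Cardinal.lift.{u} (Cardinal.mk Γ))
    (hne : ∃ T : E →L[ℝ] lp (fun _ : Γ => ℝ) 2, ¬AbsolutelySumming T)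
    (α : Cardinal.{max u w}) (hα : α < Cardinal.lift.{u} (Cardinal.mk Γ)) :
    ABLineable {T : E →L[ℝ] lp (fun _ : Γ => ℝ) 2 | ¬AbsolutelySumming T}
      α (Cardinal.lift.{u} (Cardinal.mk Γ)) := by
  obtain ⟨T₀, hT₀⟩ := hne
  exact ABLineable.of_forall_rank_lt hα fun W hW hWA =>
    exists_le_rank_eq_subset_setOf_not_absolutelySumming ENNReal.ofNat_ne_top
      (aleph0_lt_continuum.trans hΓ) hEΓ T₀ hT₀ W hW hWA

/-- Let `E` be an infinite-dimensional real Banach space, `Γ` an index set with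
`card Γ > 𝔠` and `dim E < card Γ`, and `H = ℓ₂(Γ)`. If the set `𝓛(E; H) \ Π₁(E; H)` of
continuous linear operators from `E` to `H` that are not absolutely summing is nonempty, then
it is `(α, card Γ)`-lineable in the space of continuous linear operators from `E` to `H` for
every cardinal `α < card Γ` (with universe lifts to compare cardinals). -/
theorem statement16 (E : Type u) [NormedAddCommGroup E] [NormedSpace ℝ E] [CompleteSpace E]
    (hE : ¬FiniteDimensional ℝ E) (Γ : Type w)
    (hΓ : Cardinal.continuum < Cardinal.mk Γ)
    (hEΓ : Cardinal.lift.{w} (Module.rank ℝ E) < Cardinal.lift.{u} (Cardinal.mk Γ))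
    (hne : ∃ T : E →L[ℝ] lp (fun _ : Γ => ℝ) 2, ¬AbsolutelySumming T)
    (α : Cardinal.{max u w}) (hα : α < Cardinal.lift.{u} (Cardinal.mk Γ)) :
    ABLineable {T : E →L[ℝ] lp (fun _ : Γ => ℝ) 2 | ¬AbsolutelySumming T}
      α (Cardinal.lift.{u} (Cardinal.mk Γ)) :=
  statement16_general E Γ hΓ hEΓ hne α hα
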